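/- Under the assumptions of the preceding statement, assume additionally that Φ ∈ C²((0,∞)) with Φ'' bounded away from zero, i.e. Φ''(s) ≥ c > 0 for all s > 0. Then there is a constant C > 0 such that d(ρ,ρ₀) ≥ C‖ρ − ρ₀‖²_{L²(ℝ³)} for all ρ ∈ F_M. -/

import Mathlib

open MeasureTheory Filter Real
open scoped ENNReal Topology

noncomputable section

/-- Physical space `ℝ³`. -/
abbrev Space := EuclideanSpace ℝ (Fin 3)

/-- The induced Newtonian potential `V_ρ(x) = -∫ ρ(y)/|x-y| dy`. -/
def pot (ρ : Space → ℝ) (x : Space) : ℝ := - ∫ y, ρ y / ‖x - y‖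

/-- The potential energy `E_pot(ρ) = -(1/2)∫∫ ρ(x)ρ(y)/|x-y| dy dx`. -/
def Epot (ρ : Space → ℝ) : ℝ := - (1/2) * ∫ x, ∫ y, ρ x * ρ y / ‖x - y‖

/-- The reduced energy functional `H_r(ρ) = ∫ Φ(ρ) + E_pot(ρ)`. -/
def Hr (Φ : ℝ → ℝ) (ρ : Space → ℝ) : ℝ := (∫ x, Φ (ρ x)) + Epot ρ

/-- The constraint set `F_M`. -/
def FM (Φ : ℝ → ℝ) (M : ℝ) : Set (Space → ℝ) :=
  {ρ | Integrable ρ ∧ (∀ x, 0 ≤ ρ x) ∧ Integrable (fun x => Φ (ρ x)) ∧ (∫ x, ρ x) = M}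

/-- The standing assumptions on `Φ`: `Φ ∈ C¹([0,∞))`, `Φ(0) = Φ'(0) = 0`, together
with (Φ1) strict convexity, (Φ2) growth `Φ(s) ≥ C s^{1+1/n}` for large `s` with `0 < n < 3`,
and (Φ3) `Φ(s) ≤ C s^{1+1/n'}` for small `s` with `0 < n' < 3`. -/
structure PhiAssumptions (Φ : ℝ → ℝ) (n n' : ℝ) : Prop where
  smooth : ContDiffOn ℝ 1 Φ (Set.Ici 0)
  zero : Φ 0 = 0
  deriv_zero : derivWithin Φ (Set.Ici 0) 0 = 0
  strictConvex : StrictConvexOn ℝ (Set.Ici 0) Φ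
  n_pos : 0 < n
  n_lt_three : n < 3
  n'_pos : 0 < n'
  n'_lt_three : n' < 3
  growth_large : ∃ C > 0, ∃ s₁ > 0, ∀ s, s₁ ≤ s → C * s ^ (1 + 1/n) ≤ Φ s
  growth_small : ∃ C > 0, ∃ s₀ > 0, ∀ s, 0 ≤ s → s ≤ s₀ → Φ s ≤ C * s ^ (1 + 1/n')

/-- The total energy `H(ρ,u) = (1/2)∫|u|²ρ + ∫Φ(ρ) + E_pot(ρ)` of a state `(ρ,u)`. -/
def Htot (Φ : ℝ → ℝ) (ρ : Space → ℝ) (u : Space → Space) : ℝ :=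
  (1/2) * (∫ x, ‖u x‖^2 * ρ x) + (∫ x, Φ (ρ x)) + Epot ρ

/-- The distance functional
`d(ρ,ρ₀) = ∫ [Φ(ρ) − Φ(ρ₀) + (V_{ρ₀} − E₀)(ρ − ρ₀)]`. -/
def dFun (Φ : ℝ → ℝ) (E₀ : ℝ) (ρ₀ ρ : Space → ℝ) : ℝ :=
  ∫ x, (Φ (ρ x) - Φ (ρ₀ x) + (pot ρ₀ x - E₀) * (ρ x - ρ₀ x))

/-- The squared `L²` distance of the gradient fields, `‖∇V_ρ − ∇V_σ‖²_{L²}`. -/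
def grad2 (ρ σ : Space → ℝ) : ℝ :=
  ∫ x, ‖gradient (pot ρ) x - gradient (pot σ) x‖^2


/-!
Since `Φ'' ≥ c`, the function `Φ - c s²/2` is convex on `[0, ∞)`, so `Φ` lies above each of its
tangent lines by at least `c (b - a)²/2`. Where `V₀ < E₀` the Euler–Lagrange equation gives
`Φ'(ρ₀) = E₀ - V₀`, and the integrand of `d(ρ, ρ₀)` is exactly this Taylor remainder at `ρ₀`;
where `V₀ ≥ E₀` we have `ρ₀ = 0`, and the integrand `Φ(ρ) + (V₀ - E₀) ρ` is at least `Φ(ρ)`.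
Either way it dominates `c (ρ - ρ₀)²/2`, and integrating gives `C = c/2`.

The integral has to be shown to converge: the bound `Φ(s) ≥ c s²/2` puts `ρ` and `ρ₀` in `L²`,
and then `V₀` is bounded, as `1/|z|` is the sum of an `L²` function and a function bounded by `1`.
-/

open Set Metric

theorem ConvexOn.add_derivWithin_mul_sub_le {S : Set ℝ} {f : ℝ → ℝ} (hf : ConvexOn ℝ S f)
    {a b : ℝ} (ha : a ∈ S) (hb : b ∈ S) (hd : DifferentiableWithinAt ℝ f S a) :
    f a + derivWithin f S a * (b - a) ≤ f b := by
  rcases lt_trichotomy a b with hab | rfl | hab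
  · have := hf.derivWithin_le_slope ha hb hab hd
    rw [slope_def_field, le_div_iff₀ (sub_pos.2 hab)] at this
    linarith
  · simp
  · have := hf.slope_le_derivWithin hb ha hab hd
    rw [slope_def_field, div_le_iff₀ (sub_pos.2 hab)] at this
    linarith

theorem add_derivWithin_mul_sub_add_sq_le {Φ : ℝ → ℝ} {c : ℝ}
    (hΦ1 : ContDiffOn ℝ 1 Φ (Ici 0)) (hΦ2 : ContDiffOn ℝ 2 Φ (Ioi 0))
    (hΦ'' : ∀ s : ℝ, 0 < s → c ≤ derivWithin (derivWithin Φ (Ioi 0)) (Ioi 0) s)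
    {a b : ℝ} (ha : 0 ≤ a) (hb : 0 ≤ b) :
    Φ a + derivWithin Φ (Ici 0) a * (b - a) + c / 2 * (b - a) ^ 2 ≤ Φ b := by
  have hdiff : DifferentiableOn ℝ Φ (Ioi 0) := hΦ2.differentiableOn two_ne_zero
  have hdiff' : DifferentiableOn ℝ (derivWithin Φ (Ioi 0)) (Ioi 0) :=
    (hΦ2.derivWithin (uniqueDiffOn_Ioi 0) (m := 1) le_rfl).differentiableOn one_ne_zero
  have hsq : ∀ (s : Set ℝ) x, HasDerivWithinAt (fun t => c / 2 * t ^ 2) (c * x) s x := fun s x =>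
    ((hasDerivAt_pow 2 x).const_mul (c / 2)).hasDerivWithinAt.congr_deriv (by norm_num; ring)
  have hconv : ConvexOn ℝ (Ici 0) (fun t => Φ t - c / 2 * t ^ 2) := by
    refine convexOn_of_hasDerivWithinAt2_nonneg (convex_Ici 0)
      (f' := fun t => derivWithin Φ (Ioi 0) t - c * t)
      (f'' := fun t => derivWithin (derivWithin Φ (Ioi 0)) (Ioi 0) t - c)
      (hΦ1.continuousOn.sub (by fun_prop)) ?_ ?_ ?_ <;> rw [interior_Ici] <;> intro x hx
    · exact (hdiff x hx).hasDerivWithinAt.sub (hsq _ x)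
    · exact (hdiff' x hx).hasDerivWithinAt.sub
        (((hasDerivWithinAt_id x _).const_mul c).congr_deriv (mul_one c))
    · exact sub_nonneg.2 (hΦ'' x hx)
  have hG : HasDerivWithinAt (fun t => Φ t - c / 2 * t ^ 2)
      (derivWithin Φ (Ici 0) a - c * a) (Ici 0) a :=
    ((hΦ1.differentiableOn one_ne_zero) a ha).hasDerivWithinAt.sub (hsq _ a)
  have := hconv.add_derivWithin_mul_sub_le ha hb hG.differentiableWithinAt
  rw [hG.derivWithin (uniqueDiffOn_Ici 0 a ha)] at this
  nlinarith

theorem sq_toReal_eLpNorm_two {α : Type*} [MeasurableSpace α] {μ : Measure α} {f : α → ℝ}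
    (hf : AEStronglyMeasurable f μ) : (eLpNorm f 2 μ).toReal ^ 2 = ∫ x, f x ^ 2 ∂μ := by
  rw [toReal_eLpNorm hf, lpNorm_eq_integral_norm_rpow_toReal two_ne_zero ENNReal.ofNat_ne_top hf]
  simp only [ENNReal.toReal_ofNat, Real.rpow_two, Real.norm_eq_abs, sq_abs]
  rw [← Real.rpow_natCast, ← Real.rpow_mul (integral_nonneg fun x => sq_nonneg (f x))]
  norm_num

theorem memLp_two_indicator_ball_inv_norm {E : Type*} [NormedAddCommGroup E] [NormedSpace ℝ E]
    [FiniteDimensional ℝ E] [MeasurableSpace E] [BorelSpace E] {μ : Measure E}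
    [μ.IsAddHaarMeasure] (hE : 2 < Module.finrank ℝ E) (r : ℝ) :
    MemLp ((ball (0 : E) r).indicator fun z => ‖z‖⁻¹) 2 μ := by
  have hmeas : Measurable ((ball (0 : E) r).indicator fun z => ‖z‖⁻¹) :=
    (measurable_norm.inv).indicator measurableSet_ball
  rw [memLp_two_iff_integrable_sq hmeas.aestronglyMeasurable]
  have hint : IntegrableOn (fun z : E => ‖z‖⁻¹ ^ 2) (ball 0 r) μ := by
    refine integrableOn_ball_of_norm_le_rpow (C := 1) (α := 2) (by omega) (by exact_mod_cast hE)
      (ae_of_all _ fun z => le_of_eq ?_) (by fun_prop)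
    rw [one_mul, Real.rpow_neg (norm_nonneg z), Real.rpow_two, Real.norm_of_nonneg (by positivity),
      inv_pow]
  refine (hint.integrable_indicator measurableSet_ball).congr (ae_of_all _ fun z => ?_)
  by_cases hz : z ∈ ball (0 : E) r <;> simp [hz]

theorem enorm_pot_le {ρ k : Space → ℝ} (hρ : AEStronglyMeasurable ρ)
    (hk : AEStronglyMeasurable k) (hsplit : ∀ z, ‖z‖⁻¹ ≤ ‖k z‖ + 1) (x : Space) :
    ‖pot ρ x‖ₑ ≤ eLpNorm ρ 2 volume * eLpNorm k 2 volume + eLpNorm ρ 1 volume := by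
  have hkx : MeasurePreserving (fun y : Space => x - y) volume volume :=
    Measure.measurePreserving_sub_left volume x
  have hpt : ∀ y, ‖ρ y / ‖x - y‖‖ₑ ≤ ‖ρ y * k (x - y)‖ₑ + ‖ρ y‖ₑ := fun y => by
    rw [← ofReal_norm, ← ofReal_norm, ← ofReal_norm, ← ENNReal.ofReal_add (norm_nonneg _)
      (norm_nonneg _), norm_div, norm_norm, norm_mul, div_eq_mul_inv]
    apply ENNReal.ofReal_le_ofReal
    nlinarith [hsplit (x - y), norm_nonneg (ρ y)]
  calc ‖pot ρ x‖ₑ ≤ ∫⁻ y, ‖ρ y / ‖x - y‖‖ₑ := by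
        rw [pot, enorm_neg]; exact enorm_integral_le_lintegral_enorm _
    _ ≤ ∫⁻ y, ‖ρ y * k (x - y)‖ₑ + ‖ρ y‖ₑ := lintegral_mono hpt
    _ = eLpNorm (fun y => ρ y * k (x - y)) 1 volume + eLpNorm ρ 1 volume := by
      rw [lintegral_add_right' _ hρ.enorm, eLpNorm_one_eq_lintegral_enorm,
        eLpNorm_one_eq_lintegral_enorm]
    _ ≤ eLpNorm ρ 2 volume * eLpNorm k 2 volume + eLpNorm ρ 1 volume := by
      gcongr
      rw [← eLpNorm_comp_measurePreserving hk hkx]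
      simpa using eLpNorm_le_eLpNorm_mul_eLpNorm'_of_norm (p := 2) (q := 2) hρ
        (hk.comp_measurePreserving hkx) (· * ·) 1 (ae_of_all _ fun y => by simp [norm_mul])

theorem exists_norm_pot_le {ρ : Space → ℝ} (hρ1 : Integrable ρ) (hρ2 : MemLp ρ 2) :
    ∃ C, ∀ x, ‖pot ρ x‖ ≤ C := by
  obtain ⟨k, hk, hsplit⟩ : ∃ k : Space → ℝ, MemLp k 2 volume ∧ ∀ z, ‖z‖⁻¹ ≤ ‖k z‖ + 1 := by
    refine ⟨_, memLp_two_indicator_ball_inv_norm (by simp) 1, fun z => ?_⟩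
    by_cases hz : z ∈ ball (0 : Space) 1
    · simp [hz]
    · simp only [hz, not_false_eq_true, indicator_of_notMem, norm_zero, zero_add]
      exact inv_le_one_of_one_le₀ (by simpa using hz)
  refine ⟨(eLpNorm ρ 2 volume * eLpNorm k 2 volume + eLpNorm ρ 1 volume).toReal, fun x => ?_⟩
  rw [← toReal_enorm]
  exact ENNReal.toReal_mono (by finiteness [(memLp_one_iff_integrable.2 hρ1).2, hρ2.2, hk.2])
    (enorm_pot_le hρ1.1 hk.1 hsplit x)

theorem aestronglyMeasurable_pot {ρ : Space → ℝ} (hρ : AEStronglyMeasurable ρ) :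
    AEStronglyMeasurable (pot ρ) :=
  ((hρ.comp_quasiMeasurePreserving Measure.quasiMeasurePreserving_snd).div₀
    (continuous_fst.sub continuous_snd).norm.aestronglyMeasurable).integral_prod_right'.neg

theorem memLp_two_of_mul_sq_le {α : Type*} [MeasurableSpace α] {μ : Measure α} {Φ : ℝ → ℝ}
    {a : ℝ} (ha : 0 < a) (hΦ : ∀ s, 0 ≤ s → a * s ^ 2 ≤ Φ s) {σ : α → ℝ}
    (hσ : AEStronglyMeasurable σ μ) (hσ0 : ∀ x, 0 ≤ σ x) (hΦσ : Integrable (fun x => Φ (σ x)) μ) :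
    MemLp σ 2 μ := by
  refine (memLp_two_iff_integrable_sq hσ).2 <|
    (hΦσ.const_mul a⁻¹).mono' (hσ.pow 2) (ae_of_all _ fun x => ?_)
  rw [Real.norm_of_nonneg (sq_nonneg _), le_inv_mul_iff₀ ha]
  exact hΦ _ (hσ0 x)

theorem half_mul_sq_sub_le_dFun_integrand {Φ Φ' : ℝ → ℝ} {c r r₀ V E : ℝ}
    (htangent : ∀ a b, 0 ≤ a → 0 ≤ b → Φ a + Φ' a * (b - a) + c / 2 * (b - a) ^ 2 ≤ Φ b)
    (hΦ0 : Φ 0 = 0) (hΦ'0 : Φ' 0 = 0) (hr : 0 ≤ r) (hr₀ : 0 ≤ r₀)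
    (hlt : V < E → Φ' r₀ = E - V) (hge : E ≤ V → r₀ = 0) :
    c / 2 * (r - r₀) ^ 2 ≤ Φ r - Φ r₀ + (V - E) * (r - r₀) := by
  rcases lt_or_ge V E with hVE | hVE
  · have := htangent r₀ r hr₀ hr
    rw [hlt hVE] at this
    linarith
  · obtain rfl := hge hVE
    have := htangent 0 r le_rfl hr
    rw [hΦ0, hΦ'0] at this
    nlinarith [mul_nonneg (sub_nonneg.2 hVE) hr]

theorem statement14_general (Φ : ℝ → ℝ) (n n' : ℝ) (hΦ : PhiAssumptions Φ n n')
    (M : ℝ) (ρ₀ : Space → ℝ) (h0 : ρ₀ ∈ FM Φ M)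
    (E₀ : ℝ)
    (hEL : ∀ x : Space,
      (pot ρ₀ x < E₀ → derivWithin Φ (Set.Ici 0) (ρ₀ x) = E₀ - pot ρ₀ x) ∧
      (E₀ ≤ pot ρ₀ x → ρ₀ x = 0))
    (hΦ2 : ContDiffOn ℝ 2 Φ (Set.Ioi 0))
    (c : ℝ) (hc : 0 < c)
    (hΦ'' : ∀ s : ℝ, 0 < s → c ≤ derivWithin (derivWithin Φ (Set.Ioi 0)) (Set.Ioi 0) s) :
    ∃ C > 0, ∀ ρ ∈ FM Φ M,
      C * ((eLpNorm (fun x => ρ x - ρ₀ x) 2 volume).toReal)^2 ≤ dFun Φ E₀ ρ₀ ρ := by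
  obtain ⟨h0i, h0n, h0Φ, -⟩ := h0
  have htangent := fun a b (ha : (0 : ℝ) ≤ a) (hb : 0 ≤ b) =>
    add_derivWithin_mul_sub_add_sq_le hΦ.smooth hΦ2 hΦ'' ha hb
  have hquad : ∀ s, 0 ≤ s → c / 2 * s ^ 2 ≤ Φ s := fun s hs => by
    simpa [hΦ.zero, hΦ.deriv_zero] using htangent 0 s le_rfl hs
  have h0L2 := memLp_two_of_mul_sq_le (half_pos hc) hquad h0i.1 h0n h0Φ
  obtain ⟨C, hC⟩ := exists_norm_pot_le h0i h0L2
  refine ⟨c / 2, half_pos hc, fun ρ ⟨hi, hn, hΦi, _⟩ => ?_⟩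
  have hw : MemLp (fun x => ρ x - ρ₀ x) 2 :=
    (memLp_two_of_mul_sq_le (half_pos hc) hquad hi.1 hn hΦi).sub h0L2
  have hint : Integrable fun x => Φ (ρ x) - Φ (ρ₀ x) + (pot ρ₀ x - E₀) * (ρ x - ρ₀ x) :=
    (hΦi.sub h0Φ).add <| (hi.sub h0i).bdd_mul (c := C + ‖E₀‖)
      ((aestronglyMeasurable_pot h0i.1).sub aestronglyMeasurable_const)
      (ae_of_all _ fun x => (norm_sub_le _ _).trans (by linarith [hC x]))
  rw [sq_toReal_eLpNorm_two hw.1, ← integral_const_mul]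
  exact integral_mono (((memLp_two_iff_integrable_sq hw.1).1 hw).const_mul _) hint fun x =>
    half_mul_sq_sub_le_dFun_integrand htangent hΦ.zero hΦ.deriv_zero (hn x) (h0n x)
      (hEL x).1 (hEL x).2

/-- under the assumptions of the preceding statement, if moreover
`Φ ∈ C²((0,∞))` with `Φ'' ≥ c > 0`, then `d(ρ,ρ₀) ≥ C‖ρ − ρ₀‖²_{L²}` for all `ρ ∈ F_M`. -/
theorem statement14 (Φ : ℝ → ℝ) (n n' : ℝ) (hΦ : PhiAssumptions Φ n n')
    (M : ℝ) (hM : 0 < M) (ρ₀ : Space → ℝ) (h0 : ρ₀ ∈ FM Φ M)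
    (hmin : ∀ ρ ∈ FM Φ M, Hr Φ ρ₀ ≤ Hr Φ ρ)
    (E₀ : ℝ) (hE₀ : E₀ ≤ 0)
    (hEL : ∀ x : Space,
      (pot ρ₀ x < E₀ → derivWithin Φ (Set.Ici 0) (ρ₀ x) = E₀ - pot ρ₀ x) ∧
      (E₀ ≤ pot ρ₀ x → ρ₀ x = 0))
    (hΦ2 : ContDiffOn ℝ 2 Φ (Set.Ioi 0))
    (c : ℝ) (hc : 0 < c)
    (hΦ'' : ∀ s : ℝ, 0 < s → c ≤ derivWithin (derivWithin Φ (Set.Ioi 0)) (Set.Ioi 0) s) :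
    ∃ C > 0, ∀ ρ ∈ FM Φ M,
      C * ((eLpNorm (fun x => ρ x - ρ₀ x) 2 volume).toReal)^2 ≤ dFun Φ E₀ ρ₀ ρ :=
  statement14_general Φ n n' hΦ M ρ₀ h0 E₀ hEL hΦ2 c hc hΦ''
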